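/- Let T be a valid chiral merge tree and let r ≤ t be real numbers. Then the shift map σ_{tr} : S_T(r) → S_T(t) is monotone with respect to the in-order order: if u, v ∈ S_T(r) with u preceding or equal to v in the in-order order, then σ_{tr}(u) precedes or equals σ_{tr}(v) in the in-order order. -/

import Mathlib

open scoped Classical

/-- Chiral merge trees: binary trees with a real label at every node,
and a left/right ordering of the children of each internal node. -/
inductive CMT : Type where
  | leaf (a : ℝ) : CMT
  | node (a : ℝ) (l r : CMT) : CMT

namespace CMT

/-- The label of the root of a chiral merge tree. -/
def label : CMT → ℝ
  | leaf a => a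
  | node a _ _ => a

/-- The minimum leaf label of a chiral merge tree. -/
def minLeaf : CMT → ℝ
  | leaf a => a
  | node _ l r => min (minLeaf l) (minLeaf r)

/-- The list of all labels of nodes of a chiral merge tree. -/
def labelList : CMT → List ℝ
  | leaf a => [a]
  | node a l r => a :: (labelList l ++ labelList r)

/-- In every subtree `node a l r`, the root labels of `l` and `r` are `< a`. -/
def LocalValid : CMT → Prop
  | leaf _ => True
  | node a l r => label l < a ∧ label r < a ∧ LocalValid l ∧ LocalValid r

/-- A chiral merge tree is valid if its labels are pairwise distinct and in every
subtree `node a l r` the root labels of `l` and `r` are strictly less than `a`. -/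
def Valid (T : CMT) : Prop := T.labelList.Nodup ∧ T.LocalValid

/-- The Elder barcode of a chiral merge tree: `Elder (leaf a) = {[a,∞)}`; for
`node a l r`, with `m` the larger of the two minimum leaf labels of `l` and `r`,
the unbounded bar `[m,∞)` of `Elder l ∪ Elder r` is replaced by `[m, a)`. -/
def Elder : CMT → Set (Set ℝ)
  | leaf a => {Set.Ici a}
  | node a l r =>
      insert (Set.Ico (max (minLeaf l) (minLeaf r)) a)
        ((Elder l ∪ Elder r) \ {Set.Ici (max (minLeaf l) (minLeaf r))})

/-- The subtree of a chiral merge tree at the address `w` (a word in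
`{L,R}`, encoded as `false`/`true`), if it exists. -/
def subtree? : CMT → List Bool → Option CMT
  | t, [] => some t
  | leaf _, _ :: _ => none
  | node _ l _, false :: w => subtree? l w
  | node _ _ r, true :: w => subtree? r w

/-- The label of the node of `T` at the address `w`, if such a node exists. -/
def nodeLabel? (T : CMT) (w : List Bool) : Option ℝ := (T.subtree? w).map label

/-- `T.MemS t w` means: `w` is the address of a node `v` of `T` with label `≤ t`
whose parent, if it exists, has label `> t`.  Thus `S_T(t) = {w // T.MemS t w}`. -/
def MemS (T : CMT) (t : ℝ) (w : List Bool) : Prop :=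
  (∃ a, T.nodeLabel? w = some a ∧ a ≤ t) ∧
  (∀ a, w ≠ [] → T.nodeLabel? w.dropLast = some a → t < a)

/-- The in-order (left subtree, root, right subtree) traversal of the node
addresses of a chiral merge tree. -/
def addrList : CMT → List (List Bool)
  | leaf _ => [[]]
  | node _ l r =>
      (addrList l).map (List.cons false) ++ [[]] ++ (addrList r).map (List.cons true)

/-- The node at address `u` strictly precedes the node at address `v`
in the in-order order on the nodes of `T`. -/
def InOrderLT (T : CMT) (u v : List Bool) : Prop :=
  T.addrList.idxOf u < T.addrList.idxOf v

/-- The node at address `u` precedes or equals the node at address `v`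
in the in-order order on the nodes of `T`. -/
def InOrderLE (T : CMT) (u v : List Bool) : Prop :=
  T.addrList.idxOf u ≤ T.addrList.idxOf v

/-- The number of nodes of a chiral merge tree. -/
def numNodes : CMT → ℕ
  | leaf _ => 1
  | node _ l r => 1 + numNodes l + numNodes r

/-- The number of leaves of a chiral merge tree. -/
def numLeaves : CMT → ℕ
  | leaf _ => 1
  | node _ l r => numLeaves l + numLeaves r

/-- The set of labels of leaves of a chiral merge tree. -/
def leafLabels : CMT → Set ℝ
  | leaf a => {a}
  | node _ l r => leafLabels l ∪ leafLabels r

/-- The set of labels of internal (binary) nodes of a chiral merge tree. -/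
def internalLabels : CMT → Set ℝ
  | leaf _ => ∅
  | node a l r => insert a (internalLabels l ∪ internalLabels r)

/-- The in-order traversal list of the nodes (as subtrees) of a chiral merge tree. -/
def trav : CMT → List CMT
  | leaf a => [leaf a]
  | node a l r => trav l ++ [node a l r] ++ trav r

/-- Whether a node is a leaf. -/
def isLeaf : CMT → Prop
  | leaf _ => True
  | node _ _ _ => False

end CMT
/-- The `j`-th bar of the barcode: `I₁ = [b₁, ∞)` (index `0`) and
`I_j = [b_j, d_j)` for `j ≥ 2` (indices `≠ 0`). -/
def bar {N : ℕ} (b d : Fin N → ℝ) (j : Fin N) : Set ℝ :=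
  if (j : ℕ) = 0 then Set.Ici (b j) else Set.Ico (b j) (d j)

/-- The barcode `B = {I₁, …, I_N}` as a set of intervals. -/
def barcodeOf {N : ℕ} (b d : Fin N → ℝ) : Set (Set ℝ) := Set.range (bar b d)

/-- `μ_B(I_j)`: the number of indices `k` with `I_j` strictly contained in `I_k`. -/
noncomputable def mu {N : ℕ} (b d : Fin N → ℝ) (j : Fin N) : ℕ :=
  Nat.card {k : Fin N // bar b d j ⊂ bar b d k}
/-- The sublevel set `{x ∈ [0,1] : f x ≤ t}`. -/
def sublevel (f : ℝ → ℝ) (t : ℝ) : Set ℝ := {x | x ∈ Set.Icc (0:ℝ) 1 ∧ f x ≤ t}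

/-- The set of connected components of `A ⊆ ℝ` (maximal connected subsets). -/
def Components (A : Set ℝ) : Set (Set ℝ) := {C | ∃ x ∈ A, C = connectedComponentIn A x}

/-- The left-to-right strict order on subsets of `ℝ`:
`C` is entirely to the left of `D`. -/
def CompLT (C D : Set ℝ) : Prop := ∀ x ∈ C, ∀ y ∈ D, x < y

/-- `f` and `g` are graph-equivalent: there is an increasing homeomorphism
`φ : [0,1] → [0,1]` with `f = g ∘ φ` on `[0,1]`. -/
def GraphEquiv (f g : ℝ → ℝ) : Prop :=
  ∃ φ : ℝ → ℝ, ContinuousOn φ (Set.Icc 0 1) ∧ StrictMonoOn φ (Set.Icc 0 1) ∧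
    Set.MapsTo φ (Set.Icc 0 1) (Set.Icc 0 1) ∧
    Set.SurjOn φ (Set.Icc 0 1) (Set.Icc 0 1) ∧
    ∀ x ∈ Set.Icc (0:ℝ) 1, f x = g (φ x)

/-- `f : [0,1] → ℝ` is Morse-like: continuous, and there are
`0 = p₀ < p₁ < ⋯ < p_m = 1` such that `f` is strictly monotone on each
`[p_{i-1}, p_i]`, consecutive intervals have opposite directions of monotonicity,
and the values `f(p₀), …, f(p_m)` are pairwise distinct. -/
def MorseLike (f : ℝ → ℝ) : Prop :=
  ContinuousOn f (Set.Icc 0 1) ∧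
  ∃ (m : ℕ) (p : ℕ → ℝ), p 0 = 0 ∧ p m = 1 ∧ (∀ i < m, p i < p (i + 1)) ∧
    (∀ i < m, StrictMonoOn f (Set.Icc (p i) (p (i + 1))) ∨
      StrictAntiOn f (Set.Icc (p i) (p (i + 1)))) ∧
    (∀ i, i + 1 < m →
      (StrictMonoOn f (Set.Icc (p i) (p (i + 1))) ↔
        StrictAntiOn f (Set.Icc (p (i + 1)) (p (i + 2))))) ∧
    (∀ i j, i ≤ m → j ≤ m → i ≠ j → f (p i) ≠ f (p j))

/-- `f` realizes the barcode `B`: for all `r ≤ t`, the cardinality of the image of the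
inclusion-induced map on connected components of sublevel sets (i.e. the number of
components of `{f ≤ t}` containing some component of `{f ≤ r}`) equals the number of
intervals of `B` containing both `r` and `t`. -/
def RealizesBarcode (f : ℝ → ℝ) (B : Set (Set ℝ)) : Prop :=
  ∀ r t : ℝ, r ≤ t →
    {D | D ∈ Components (sublevel f t) ∧ ∃ C ∈ Components (sublevel f r), C ⊆ D}.ncard
      = {I | I ∈ B ∧ r ∈ I ∧ t ∈ I}.ncard

/-- `f` realizes the valid chiral merge tree `T`: for each `t` there is an
order-isomorphism `α t` from the components of `{f ≤ t}` (left-to-right order) to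
`S_T(t)` (in-order order), commuting with the inclusion-induced maps on components
and the shift maps `σ_{tr}` (which send each node to its unique ancestor in `S_T(t)`;
being an ancestor is expressed by the address being a prefix). -/
def RealizesCMT (f : ℝ → ℝ) (T : CMT) : Prop :=
  ∃ α : (t : ℝ) → {C : Set ℝ // C ∈ Components (sublevel f t)} →
      {w : List Bool // T.MemS t w},
    (∀ t : ℝ, Function.Bijective (α t)) ∧
    (∀ (t : ℝ) (C D : {C : Set ℝ // C ∈ Components (sublevel f t)}),
      CompLT C.1 D.1 ↔ T.InOrderLT (α t C).1 (α t D).1) ∧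
    (∀ r t : ℝ, r ≤ t →
      ∀ (C : {C : Set ℝ // C ∈ Components (sublevel f r)})
        (D : {C : Set ℝ // C ∈ Components (sublevel f t)}),
        C.1 ⊆ D.1 → (α t D).1 <+: (α r C).1)

/-- `f` is piecewise linear on `[0,1]`. -/
def PiecewiseLinear (f : ℝ → ℝ) : Prop :=
  ∃ (m : ℕ) (p : ℕ → ℝ), p 0 = 0 ∧ p m = 1 ∧ (∀ i < m, p i < p (i + 1)) ∧
    ∀ i < m, ∃ c e : ℝ, ∀ x ∈ Set.Icc (p i) (p (i + 1)), f x = c * x + e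
/-- The interval module `k_I` at time `t` is the `k`-vector space
`PLift (t ∈ I) → k` of functions from (proofs of) `t ∈ I` to `k`, which is
one-dimensional if `t ∈ I` and the zero space otherwise.  `intervalShift k I r t` is
its shift map `k_I(r) → k_I(t)`: the identity when `r, t ∈ I` and zero otherwise. -/
noncomputable def intervalShift (k : Type) [Field k] (I : Set ℝ) (r t : ℝ) :
    (PLift (r ∈ I) → k) →ₗ[k] (PLift (t ∈ I) → k) where
  toFun x := fun _ => if hr : r ∈ I then x ⟨hr⟩ else 0
  map_add' x y := by
    funext ht
    by_cases hr : r ∈ I <;> simp [hr]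
  map_smul' c x := by
    funext ht
    by_cases hr : r ∈ I <;> simp [hr]


/-!
Two distinct nodes of `S_T(t)` are never in an ancestor relation, since labels strictly decrease
away from the root. The in-order position of an address is its lexicographic position once
`L`, `R` and the end of the address are encoded as `0`, `2` and `1`; for two addresses neither of
which is a prefix of the other, this comparison is decided at their first difference, so it is
inherited by all their extensions. As `σ u`, `σ v` are prefixes of `u`, `v`, the order of `u` and
`v` therefore forces that of `σ u` and `σ v`.
-/

namespace List

variable {α β : Type*}

theorem Pairwise.idxOf_le_idxOf_iff [BEq α] [LawfulBEq α] [LinearOrder β] {f : α → β}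
    {l : List α} (hl : l.Pairwise (f · < f ·)) {x y : α} (hx : x ∈ l) (hy : y ∈ l) :
    l.idxOf x ≤ l.idxOf y ↔ f x ≤ f y := by
  have hx' := idxOf_lt_length_iff.2 hx
  have hy' := idxOf_lt_length_iff.2 hy
  have hlt : ∀ {a b : α} (ha : l.idxOf a < l.length) (hb : l.idxOf b < l.length),
      l.idxOf a < l.idxOf b → f a < f b := fun ha hb hab => by
    simpa only [getElem_idxOf] using pairwise_iff_getElem.1 hl _ _ ha hb hab
  constructor
  · intro h
    rcases h.lt_or_eq with h | h
    · exact (hlt hx' hy' h).le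
    · rw [(idxOf_inj hx).1 h]
  · intro h
    by_contra! h'
    exact (hlt hy' hx' h').not_ge h

theorem append_lt_append_iff_of_not_prefix [LinearOrder α] :
    ∀ {l₁ l₂ : List α} (m₁ m₂ : List α), ¬ l₁ <+: l₂ → ¬ l₂ <+: l₁ →
      (l₁ ++ m₁ < l₂ ++ m₂ ↔ l₁ < l₂)
  | [], _, _, _, h, _ => absurd nil_prefix h
  | _, [], _, _, _, h => absurd nil_prefix h
  | a :: l₁, b :: l₂, m₁, m₂, h₁, h₂ => by
    simp only [cons_append, cons_lt_cons_iff]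
    rcases eq_or_ne a b with rfl | hab
    · rw [prefix_cons_inj] at h₁ h₂
      rw [append_lt_append_iff_of_not_prefix m₁ m₂ h₁ h₂]
    · simp [hab]

theorem append_le_append_iff_of_not_prefix [LinearOrder α] {l₁ l₂ : List α} (m₁ m₂ : List α)
    (h₁ : ¬ l₁ <+: l₂) (h₂ : ¬ l₂ <+: l₁) : l₁ ++ m₁ ≤ l₂ ++ m₂ ↔ l₁ ≤ l₂ := by
  simpa only [not_lt] using (append_lt_append_iff_of_not_prefix m₂ m₁ h₂ h₁).not

end List

namespace CMT

theorem subtree?_append (T : CMT) (x y : List Bool) :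
    T.subtree? (x ++ y) = (T.subtree? x).bind (·.subtree? y) := by
  induction x generalizing T with
  | nil => simp [subtree?]
  | cons b x ih => cases T <;> cases b <;> simp [subtree?, ih]

theorem LocalValid.subtree? {T s : CMT} (hT : T.LocalValid) {w : List Bool}
    (h : T.subtree? w = some s) : s.LocalValid ∧ s.label ≤ T.label := by
  induction w generalizing T with
  | nil =>
    obtain rfl : T = s := by simpa [CMT.subtree?] using h
    exact ⟨hT, le_rfl⟩
  | cons b w ih =>
    cases T with
    | leaf a => cases h
    | node a l r =>
      obtain ⟨hl, hr, hlv, hrv⟩ := hT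
      cases b
      · exact (ih hlv h).imp_right fun h => h.trans hl.le
      · exact (ih hrv h).imp_right fun h => h.trans hr.le

theorem LocalValid.nodeLabel?_append_le {T : CMT} (hT : T.LocalValid) {x y : List Bool}
    {a b : ℝ} (ha : T.nodeLabel? x = some a) (hb : T.nodeLabel? (x ++ y) = some b) : b ≤ a := by
  simp only [nodeLabel?, Option.map_eq_some_iff] at ha hb
  obtain ⟨s, hs, rfl⟩ := ha
  obtain ⟨s', hs', rfl⟩ := hb
  rw [subtree?_append, hs, Option.bind_some] at hs'
  exact ((hT.subtree? hs).1.subtree? hs').2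

theorem exists_nodeLabel?_of_append {T : CMT} {x y : List Bool} {b : ℝ}
    (hb : T.nodeLabel? (x ++ y) = some b) : ∃ a, T.nodeLabel? x = some a := by
  cases hx : T.subtree? x with
  | none => simp [nodeLabel?, subtree?_append, hx] at hb
  | some s => exact ⟨s.label, by simp [nodeLabel?, hx]⟩

theorem mem_addrList_of_subtree? {T s : CMT} {w : List Bool} (h : T.subtree? w = some s) :
    w ∈ T.addrList := by
  induction T generalizing w with
  | leaf a => cases w with
    | nil => simp [addrList]
    | cons b w => cases h
  | node a l r ihl ihr => cases w with
    | nil => simp [addrList]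
    | cons b w =>
      cases b
      · simpa [addrList] using ihl h
      · simpa [addrList] using ihr h

theorem MemS.mem_addrList {T : CMT} {t : ℝ} {w : List Bool} (h : T.MemS t w) :
    w ∈ T.addrList := by
  obtain ⟨⟨a, ha, -⟩, -⟩ := h
  obtain ⟨s, hs, -⟩ := Option.map_eq_some_iff.1 ha
  exact mem_addrList_of_subtree? hs

theorem MemS.eq_of_prefix {T : CMT} (hT : T.LocalValid) {t : ℝ} {x y : List Bool}
    (hx : T.MemS t x) (hy : T.MemS t y) (hxy : x <+: y) : x = y := by
  obtain ⟨c, rfl⟩ := hxy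
  obtain rfl | ⟨c, d, rfl⟩ := c.eq_nil_or_concat'
  · simp
  obtain ⟨⟨a, ha, hat⟩, -⟩ := hx
  obtain ⟨⟨b, hb, -⟩, hparent⟩ := hy
  rw [← List.append_assoc] at hb hparent
  obtain ⟨p, hp⟩ := exists_nodeLabel?_of_append hb
  have htp : t < p := hparent p (by simp) (by rwa [List.dropLast_concat])
  have hpa : p ≤ a := hT.nodeLabel?_append_le ha hp
  linarith

def inorderKey (w : List Bool) : List ℕ := w.map (fun b => if b then 2 else 0) ++ [1]

theorem inorderKey_cons (b : Bool) (w : List Bool) :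
    inorderKey (b :: w) = (if b then 2 else 0) :: inorderKey w := rfl

theorem addrList_pairwise (T : CMT) :
    T.addrList.Pairwise (inorderKey · < inorderKey ·) := by
  induction T with
  | leaf a => simp [addrList]
  | node a l r ihl ihr =>
    simp only [addrList, List.pairwise_append, List.pairwise_map, inorderKey_cons,
      List.mem_append, List.mem_map, List.mem_singleton]
    refine ⟨⟨ihl.imp (by simp), by simp, ?_⟩, ihr.imp (by simp), ?_⟩
    · rintro _ ⟨x, -, rfl⟩ _ rfl
      simp [inorderKey, List.cons_lt_cons_iff]
    · rintro _ (⟨x, -, rfl⟩ | rfl) _ ⟨y, -, rfl⟩ <;> simp [inorderKey, List.cons_lt_cons_iff]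

theorem inOrderLE_iff {T : CMT} {x y : List Bool} (hx : x ∈ T.addrList) (hy : y ∈ T.addrList) :
    T.InOrderLE x y ↔ inorderKey x ≤ inorderKey y :=
  T.addrList_pairwise.idxOf_le_idxOf_iff hx hy

theorem inorderKey_append_le_iff {x y : List Bool} (hxy : ¬ x <+: y) (hyx : ¬ y <+: x)
    (c d : List Bool) :
    inorderKey (x ++ c) ≤ inorderKey (y ++ d) ↔ inorderKey x ≤ inorderKey y := by
  have hcode : Function.Injective fun b : Bool => if b then 2 else 0 := by decide
  simp only [inorderKey, List.map_append, List.append_assoc]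
  rw [← List.prefix_map_iff_of_injective hcode] at hxy hyx
  rw [List.append_le_append_iff_of_not_prefix _ _ hxy hyx,
    List.append_le_append_iff_of_not_prefix _ _ hxy hyx]

end CMT

theorem shift_map_inorder_monotone_general (T : CMT) (hT : T.Valid) (r t : ℝ)
    (σ : {w : List Bool // T.MemS r w} → {w : List Bool // T.MemS t w})
    (hσ : ∀ v, (σ v).1 <+: v.1)
    (u v : {w : List Bool // T.MemS r w}) (huv : T.InOrderLE u.1 v.1) :
    T.InOrderLE (σ u).1 (σ v).1 := by
  rw [CMT.inOrderLE_iff u.2.mem_addrList v.2.mem_addrList] at huv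
  rw [CMT.inOrderLE_iff (σ u).2.mem_addrList (σ v).2.mem_addrList]
  by_cases hσuv : (σ u).1 <+: (σ v).1
  · rw [(σ u).2.eq_of_prefix hT.2 (σ v).2 hσuv]
  by_cases hσvu : (σ v).1 <+: (σ u).1
  · rw [(σ v).2.eq_of_prefix hT.2 (σ u).2 hσvu]
  obtain ⟨c, hc⟩ := hσ u
  obtain ⟨d, hd⟩ := hσ v
  rwa [← hc, ← hd, CMT.inorderKey_append_le_iff hσuv hσvu] at huv

/-- the shift map `σ_{tr} : S_T(r) → S_T(t)` of a valid chiral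
merge tree (sending each node to its unique ancestor, i.e. prefix, in `S_T(t)`) is
monotone with respect to the in-order order. -/
theorem shift_map_inorder_monotone (T : CMT) (hT : T.Valid) (r t : ℝ) (hrt : r ≤ t)
    (σ : {w : List Bool // T.MemS r w} → {w : List Bool // T.MemS t w})
    (hσ : ∀ v, (σ v).1 <+: v.1)
    (u v : {w : List Bool // T.MemS r w}) (huv : T.InOrderLE u.1 v.1) :
    T.InOrderLE (σ u).1 (σ v).1 :=
  shift_map_inorder_monotone_general T hT r t σ hσ u v huv
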